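/- arXiv:1406.3614 — 3 statements merged into one kernel-verified Lean document; each statement's English description precedes it below -/
import Mathlib

section
/- For every λ = ((u_n),(v_n),(w_n)) ∈ I×J×J, the set Ω_λ is open, connected and simply connected, contains the half-line [0,+∞), and satisfies Ω_λ + t ⊆ Ω_λ for every t ≥ 0. -/
open Complex Filter Real Set

/-- The half-open rectangle `R(u₁,u₂,v,w) = {z : u₁ < Re z ≤ u₂, -w < Im z < v}`. -/
def Rect (u₁ u₂ v w : ℝ) : Set ℂ :=
  {z : ℂ | u₁ < z.re ∧ z.re ≤ u₂ ∧ -w < z.im ∧ z.im < v}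

/-- Membership in `I`: strictly increasing sequences of positive reals tending to `+∞`. -/
def memI (u : ℕ → ℝ) : Prop :=
  StrictMono u ∧ (∀ n, 0 < u n) ∧ Tendsto u atTop atTop

/-- Membership in `J`: increasing sequences with values in `[1,∞)`. -/
def memJ (v : ℕ → ℝ) : Prop :=
  Monotone v ∧ ∀ n, 1 ≤ v n

/-- The comb-like domain `Ω_λ` associated with `λ = ((u_n),(v_n),(w_n)) ∈ I × J × J`. -/
def OmegaDomain (u v w : ℕ → ℝ) : Set ℂ :=
  Rect (-1) (u 0) 1 1 ∪ ⋃ j : ℕ, Rect (u j) (u (j + 1)) (v j) (w j)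

private lemma omega_locate (u : ℕ → ℝ) (hu : memI u) {x : ℝ} (hx : u 0 < x) :
    ∃ k, u k < x ∧ x ≤ u (k + 1) := by
  have hex : ∃ n, x ≤ u n := (hu.2.2.eventually_ge_atTop x).exists
  classical
  set n := Nat.find hex with hn
  have hxn : x ≤ u n := Nat.find_spec hex
  have hn0 : n ≠ 0 := by
    intro h
    rw [h] at hxn; linarith
  refine ⟨n - 1, ?_, ?_⟩
  · have := Nat.find_min hex (m := n - 1) (by omega)
    linarith [not_le.mp this]
  · have : n - 1 + 1 = n := by omega
    rw [this]; exact hxn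

private lemma omega_mem_small (u v w : ℕ → ℝ) (hu : memI u) (hv : memJ v) (hw : memJ w)
    {z : ℂ} (hx : -1 < z.re) (hy1 : -1 < z.im) (hy2 : z.im < 1) :
    z ∈ OmegaDomain u v w := by
  rcases le_or_gt z.re (u 0) with h | h
  · exact Or.inl ⟨hx, h, hy1, hy2⟩
  · obtain ⟨k, hk1, hk2⟩ := omega_locate u hu h
    exact Or.inr (mem_iUnion.2 ⟨k, hk1, hk2, by linarith [hw.2 k], by linarith [hv.2 k]⟩)

private lemma omega_re_pos (u v w : ℕ → ℝ) (hu : memI u) {z : ℂ}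
    (hz : z ∈ OmegaDomain u v w) : -1 < z.re := by
  rcases hz with h | h
  · exact h.1
  · obtain ⟨j, hj⟩ := mem_iUnion.1 h
    have := hu.2.1 j
    linarith [hj.1]

/-- vertical scaling by `s ∈ [0,1]` stays in the domain. -/
private lemma omega_vert (u v w : ℕ → ℝ) (hv : memJ v) (hw : memJ w)
    {z : ℂ} (hz : z ∈ OmegaDomain u v w)
    {s : ℝ} (hs0 : 0 ≤ s) (hs1 : s ≤ 1) :
    ((z.re : ℂ) + (s * z.im : ℝ) * I) ∈ OmegaDomain u v w := by
  have hre : ((z.re : ℂ) + (s * z.im : ℝ) * I).re = z.re := by simp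
  have him : ((z.re : ℂ) + (s * z.im : ℝ) * I).im = s * z.im := by simp
  rcases hz with ⟨h1, h2, h3, h4⟩ | h
  · refine Or.inl ⟨by rwa [hre], by rwa [hre], ?_, ?_⟩ <;> rw [him] <;> nlinarith
  · obtain ⟨j, h1, h2, h3, h4⟩ := mem_iUnion.1 h
    refine Or.inr (mem_iUnion.2 ⟨j, by rwa [hre], by rwa [hre], ?_, ?_⟩) <;>
      rw [him] <;> rcases le_or_gt 0 z.im with hzi | hzi <;>
      nlinarith [hv.2 j, hw.2 j]

private lemma omega_shift (u v w : ℕ → ℝ) (hu : memI u) (hv : memJ v) (hw : memJ w)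
    {z : ℂ} (hz : z ∈ OmegaDomain u v w) {t : ℝ} (ht : 0 ≤ t) :
    z + (t : ℂ) ∈ OmegaDomain u v w := by
  have hre : (z + (t : ℂ)).re = z.re + t := by simp
  have him : (z + (t : ℂ)).im = z.im := by simp
  rcases hz with ⟨h1, h2, h3, h4⟩ | h
  · -- in the initial rectangle; use the small lemma
    exact omega_mem_small u v w hu hv hw (by rw [hre]; linarith)
      (by rw [him]; linarith) (by rw [him]; linarith)
  · obtain ⟨j, h1, h2, h3, h4⟩ := mem_iUnion.1 h
    rcases le_or_gt (z.re + t) (u (j + 1)) with hc | hc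
    · exact Or.inr (mem_iUnion.2 ⟨j, by rw [hre]; linarith, by rwa [hre],
        by rwa [him], by rwa [him]⟩)
    · have hloc : u 0 < z.re + t := by
        have : u 0 ≤ u (j + 1) := hu.1.monotone (Nat.zero_le _)
        linarith
      obtain ⟨k, hk1, hk2⟩ := omega_locate u hu hloc
      have hjk : j ≤ k := by
        by_contra hcon
        push_neg at hcon
        have : u (k + 1) ≤ u j := hu.1.monotone (by omega)
        linarith
      refine Or.inr (mem_iUnion.2 ⟨k, by rwa [hre], by rwa [hre], ?_, ?_⟩) <;> rw [him]
      · linarith [hw.1 hjk]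
      · linarith [hv.1 hjk]

/-- an open rectangle. -/
private lemma isOpen_openRect (a b c d : ℝ) :
    IsOpen {z : ℂ | a < z.re ∧ z.re < b ∧ c < z.im ∧ z.im < d} := by
  have he : {z : ℂ | a < z.re ∧ z.re < b ∧ c < z.im ∧ z.im < d} =
      ({z : ℂ | a < z.re} ∩ {z : ℂ | z.re < b}) ∩
      ({z : ℂ | c < z.im} ∩ {z : ℂ | z.im < d}) := by
    ext z; simp [Set.mem_setOf_eq]; tauto
  rw [he]
  exact (((isOpen_lt continuous_const continuous_re).inter
    (isOpen_lt continuous_re continuous_const)).inter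
    ((isOpen_lt continuous_const continuous_im).inter
    (isOpen_lt continuous_im continuous_const)))

private lemma omega_isOpen (u v w : ℕ → ℝ) (hu : memI u) (hv : memJ v) (hw : memJ w) :
    IsOpen (OmegaDomain u v w) := by
  rw [isOpen_iff_forall_mem_open]
  intro z hz
  rcases hz with ⟨h1, h2, h3, h4⟩ | h
  · refine ⟨{z : ℂ | -1 < z.re ∧ z.re < u 1 ∧ -1 < z.im ∧ z.im < 1}, ?_,
      isOpen_openRect _ _ _ _, ⟨h1, by have := hu.1 (show 0 < 1 by norm_num); linarith,
      h3, h4⟩⟩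
    rintro y ⟨g1, g2, g3, g4⟩
    rcases le_or_gt y.re (u 0) with hc | hc
    · exact Or.inl ⟨g1, hc, g3, g4⟩
    · exact Or.inr (mem_iUnion.2 ⟨0, hc, le_of_lt g2, by linarith [hw.2 0],
        by linarith [hv.2 0]⟩)
  · obtain ⟨j, h1, h2, h3, h4⟩ := mem_iUnion.1 h
    refine ⟨{z : ℂ | u j < z.re ∧ z.re < u (j + 2) ∧ -w j < z.im ∧ z.im < v j}, ?_,
      isOpen_openRect _ _ _ _, ⟨h1, by have := hu.1 (show j + 1 < j + 2 by omega); linarith,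
      h3, h4⟩⟩
    rintro y ⟨g1, g2, g3, g4⟩
    rcases le_or_gt y.re (u (j + 1)) with hc | hc
    · exact Or.inr (mem_iUnion.2 ⟨j, g1, hc, g3, g4⟩)
    · have mv : v j ≤ v (j + 1) := hv.1 (by omega)
      have mw : w j ≤ w (j + 1) := hw.1 (by omega)
      exact Or.inr (mem_iUnion.2 ⟨j + 1, hc, le_of_lt g2, by linarith, by linarith⟩)

private lemma omega_contractible (u v w : ℕ → ℝ) (hu : memI u) (hv : memJ v) (hw : memJ w) :
    ContractibleSpace ↥(OmegaDomain u v w) := by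
  rw [contractible_iff_id_nullhomotopic]
  have h0 : (0 : ℂ) ∈ OmegaDomain u v w :=
    omega_mem_small u v w hu hv hw (by norm_num) (by norm_num) (by norm_num)
  refine ⟨⟨0, h0⟩, ?_⟩
  -- explicit contraction
  set f : ℝ → ℂ → ℂ := fun t z =>
    ((min (2 - 2 * t) 1 * z.re : ℝ) : ℂ) + ((max (1 - 2 * t) 0 * z.im : ℝ) : ℂ) * I with hf
  have hmem : ∀ (t : ℝ), t ∈ Icc (0:ℝ) 1 → ∀ z ∈ OmegaDomain u v w,
      f t z ∈ OmegaDomain u v w := by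
    rintro t ⟨ht0, ht1⟩ z hz
    rcases le_or_gt t (1/2) with hc | hc
    · have hmin : min (2 - 2 * t) 1 = 1 := min_eq_right (by linarith)
      have hmax : max (1 - 2 * t) 0 = 1 - 2 * t := max_eq_left (by linarith)
      have := omega_vert u v w hv hw hz (s := 1 - 2 * t) (by linarith) (by linarith)
      simpa [hf, hmin, hmax] using this
    · have hmin : min (2 - 2 * t) 1 = 2 - 2 * t := min_eq_left (by linarith)
      have hmax : max (1 - 2 * t) 0 = 0 := max_eq_right (by linarith)
      have hre : -1 < z.re := omega_re_pos u v w hu hz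
      have hre2 : -1 < (2 - 2 * t) * z.re := by
        rcases le_or_gt 0 z.re with h | h <;> nlinarith
      have : f t z = (((2 - 2 * t) * z.re : ℝ) : ℂ) := by
        simp [hf, hmin, hmax]
      rw [this]
      exact omega_mem_small u v w hu hv hw (by simpa using hre2) (by norm_num) (by norm_num)
  have hcont : Continuous fun p : ℝ × ℂ => f p.1 p.2 := by
    apply Continuous.add
    · exact continuous_ofReal.comp
        (((continuous_const.sub (continuous_const.mul continuous_fst)).min
          continuous_const).mul (continuous_re.comp continuous_snd))
    · exact (continuous_ofReal.comp
        (((continuous_const.sub (continuous_const.mul continuous_fst)).max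
          continuous_const).mul (continuous_im.comp continuous_snd))).mul continuous_const
  refine ⟨⟨⟨fun p => ⟨f p.1 p.2, hmem p.1 p.1.2 p.2 p.2.2⟩, ?_⟩, ?_, ?_⟩⟩
  · exact (hcont.comp (continuous_subtype_val.prodMap continuous_subtype_val)).subtype_mk _
  · intro z
    apply Subtype.ext
    show f ((0 : unitInterval) : ℝ) (z : ℂ) = (z : ℂ)
    have : ((0 : unitInterval) : ℝ) = 0 := rfl
    rw [this, hf]
    norm_num [Complex.re_add_im]
  · intro z
    apply Subtype.ext
    show f ((1 : unitInterval) : ℝ) (z : ℂ) = ((0 : ℂ))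
    have : ((1 : unitInterval) : ℝ) = 1 := rfl
    rw [this, hf]
    norm_num

/-- For every `λ ∈ I × J × J`, the set `Ω_λ` is open, connected and simply connected,
contains `[0,∞)`, and satisfies `Ω_λ + t ⊆ Ω_λ` for every `t ≥ 0`. -/
theorem omegaDomain_properties (u v w : ℕ → ℝ)
    (hu : memI u) (hv : memJ v) (hw : memJ w) :
    IsOpen (OmegaDomain u v w) ∧
    IsConnected (OmegaDomain u v w) ∧
    SimplyConnectedSpace ↥(OmegaDomain u v w) ∧
    (∀ x : ℝ, 0 ≤ x → (x : ℂ) ∈ OmegaDomain u v w) ∧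
    (∀ t : ℝ, 0 ≤ t →
      (fun z => z + (t : ℂ)) '' OmegaDomain u v w ⊆ OmegaDomain u v w) := by
  have hcontr := omega_contractible u v w hu hv hw
  have hconn : IsConnected (OmegaDomain u v w) := by
    rw [isConnected_iff_connectedSpace]
    infer_instance
  refine ⟨omega_isOpen u v w hu hv hw, hconn, inferInstance, ?_, ?_⟩
  · intro x hx
    exact omega_mem_small u v w hu hv hw (by simp; linarith) (by simp) (by simp)
  · rintro t ht z ⟨y, hy, rfl⟩
    exact omega_shift u v w hu hv hw hy ht
end

section
/- Fix u ∈ ℝ and w > 0, and let f(z) := ((1+i)/√2) · √((1+z)/(1−z)) + u − i·w for z ∈ 𝔻, where the square root is the principal branch, so that f is a bijection from 𝔻 onto {z ∈ ℂ : Re z > u, Im z > −w}. Then Arg(1 − f⁻¹(t)) → π/2 as real t → +∞ (here f⁻¹(t) ∈ 𝔻 is defined for real t > u). -/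
/-!
The inverse of `f` is explicit: `f⁻¹(ζ) = (S - 1)/(S + 1)` with `S = -i (ζ - u + i w)²`, since the
principal square root of `S` is `((1 - i)/√2)(ζ - u + i w)`, which has positive real part on the
quadrant. For real `t` and `a = t - u` this gives `1 - f⁻¹(t) = 2/(S + 1)` with
`S + 1 = 2aw + 1 - i(a² - w²)`, so `Arg(1 - f⁻¹(t)) = arctan((a² - w²)/(2aw + 1)) → π/2`.
-/

open Complex Filter Real Set

/-- The open unit disc in the complex plane. -/
noncomputable def unitDisc : Set ℂ := {z : ℂ | ‖z‖ < 1}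

/-- The map `f(z) = ((1+i)/√2) √((1+z)/(1-z)) + u - i w`, where the square root is the
principal branch `√ζ = exp((1/2) Log ζ)`. -/
noncomputable def quadrantMap (u w : ℝ) (z : ℂ) : ℂ :=
  ((1 + Complex.I) / (Real.sqrt 2 : ℂ)) *
    Complex.exp ((1 / 2 : ℂ) * Complex.log ((1 + z) / (1 - z))) + (u : ℂ) -
    Complex.I * (w : ℂ)

namespace Complex

theorem exp_half_log_sq {s : ℂ} (hs : 0 < s.re) : exp (1 / 2 * log (s ^ 2)) = s := by
  have hs0 : s ≠ 0 := fun h ↦ by simp [h] at hs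
  have harg := abs_lt.mp (abs_arg_lt_pi_div_two_iff.mpr (Or.inl hs))
  rw [one_div, mul_comm, ← cpow_def_of_ne_zero (pow_ne_zero 2 hs0)]
  exact pow_cpow_ofNat_inv harg.1 harg.2.le

theorem arg_eq_arctan_of_re_pos {x : ℂ} (hx : 0 < x.re) : arg x = Real.arctan (x.im / x.re) := by
  have harg := abs_lt.mp (abs_arg_lt_pi_div_two_iff.mpr (Or.inl hx))
  rw [← tan_arg, Real.arctan_tan harg.1 harg.2]

theorem arg_ofReal_div_of_re_pos {r : ℝ} (hr : 0 < r) {x : ℂ} (hx : 0 < x.re) :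
    arg (r / x) = -arg x := by
  rw [div_eq_mul_inv, arg_real_mul _ hr, arg_inv, if_neg fun h ↦ (arg_eq_pi_iff.mp h).1.not_gt hx]

end Complex

/-- The Cayley transform, mapping the right half-plane onto the unit disc. -/
noncomputable def cayley (S : ℂ) : ℂ := (S - 1) / (S + 1)

section Cayley

variable {S : ℂ}

theorem add_one_ne_zero_of_re_pos (hS : 0 < S.re) : S + 1 ≠ 0 := fun h ↦ by
  have := congrArg re h
  simp only [add_re, one_re, zero_re] at this
  linarith

theorem cayley_mem_unitDisc (hS : 0 < S.re) : cayley S ∈ unitDisc := by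
  have hnormSq : normSq (S - 1) < normSq (S + 1) := by
    simp only [normSq_apply, sub_re, sub_im, add_re, add_im, one_re, one_im]
    nlinarith
  change ‖cayley S‖ < 1
  rw [cayley, norm_div,
    div_lt_one (norm_pos_iff.mpr (add_one_ne_zero_of_re_pos hS))]
  exact Real.sqrt_lt_sqrt (normSq_nonneg _) hnormSq

theorem one_sub_cayley (hS : 0 < S.re) : 1 - cayley S = 2 / (S + 1) := by
  have := add_one_ne_zero_of_re_pos hS
  rw [cayley]; field_simp; ring

theorem one_add_cayley_div_one_sub_cayley (hS : 0 < S.re) :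
    (1 + cayley S) / (1 - cayley S) = S := by
  have := add_one_ne_zero_of_re_pos hS
  rw [one_sub_cayley hS, cayley]; field_simp; ring

end Cayley

/-- The square of `((1 - i)/√2)(ζ - u + iw)`; it maps the quadrant `{Re ζ > u, Im ζ > -w}` onto
the right half-plane. -/
noncomputable def quadrantToHalfPlane (u w : ℝ) (ζ : ℂ) : ℂ := -I * (ζ - u + I * w) ^ 2

noncomputable def quadrantInv (u w : ℝ) (ζ : ℂ) : ℂ := cayley (quadrantToHalfPlane u w ζ)

section Quadrant

variable {u w : ℝ} {ζ : ℂ}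

theorem quadrantToHalfPlane_re :
    (quadrantToHalfPlane u w ζ).re = 2 * (ζ.re - u) * (ζ.im + w) := by
  simp [quadrantToHalfPlane, sq]; ring

theorem quadrantToHalfPlane_im :
    (quadrantToHalfPlane u w ζ).im = (ζ.im + w) ^ 2 - (ζ.re - u) ^ 2 := by
  simp [quadrantToHalfPlane, sq]

theorem quadrantToHalfPlane_re_pos (hζ : u < ζ.re ∧ -w < ζ.im) :
    0 < (quadrantToHalfPlane u w ζ).re := by
  rw [quadrantToHalfPlane_re]
  have := mul_pos (sub_pos.mpr hζ.1) (neg_lt_iff_pos_add.mp hζ.2)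
  linarith

theorem quadrantInv_mem_unitDisc (hζ : u < ζ.re ∧ -w < ζ.im) : quadrantInv u w ζ ∈ unitDisc :=
  cayley_mem_unitDisc (quadrantToHalfPlane_re_pos hζ)

theorem quadrantMap_quadrantInv (hζ : u < ζ.re ∧ -w < ζ.im) :
    quadrantMap u w (quadrantInv u w ζ) = ζ := by
  have hsqrt2 : ((Real.sqrt 2 : ℝ) : ℂ) ^ 2 = 2 := by
    rw [← ofReal_pow, Real.sq_sqrt zero_le_two, ofReal_ofNat]
  set s : ℂ := (((Real.sqrt 2)⁻¹ : ℝ) : ℂ) * ((1 - I) * (ζ - u + I * w)) with hs_def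
  have hs_sq : s ^ 2 = quadrantToHalfPlane u w ζ := by
    have h1 : (1 - I) ^ 2 = -2 * I := by ring_nf; rw [I_sq]; ring
    rw [hs_def, quadrantToHalfPlane, mul_pow, mul_pow, ← ofReal_pow, inv_pow,
      Real.sq_sqrt zero_le_two, h1]
    push_cast; ring
  have hs_re : 0 < s.re := by
    rw [hs_def, re_ofReal_mul]
    simp only [mul_re, sub_re, sub_im, add_re, add_im, one_re, one_im, I_re, I_im, ofReal_re,
      ofReal_im, mul_im]
    exact mul_pos (by positivity) (by linarith [hζ.1, hζ.2])
  rw [quadrantMap, quadrantInv, one_add_cayley_div_one_sub_cayley (quadrantToHalfPlane_re_pos hζ),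
    ← hs_sq, exp_half_log_sq hs_re, hs_def, ofReal_inv]
  have hc : (1 + I) / (Real.sqrt 2 : ℂ) * (Real.sqrt 2 : ℂ)⁻¹ * (1 - I) = 1 := by
    field_simp
    linear_combination -hsqrt2 - I_sq
  linear_combination (ζ - u + I * w) * hc

theorem arg_one_sub_quadrantInv_ofReal (hw : 0 < w) {t : ℝ} (ht : u < t) :
    arg (1 - quadrantInv u w t) = Real.arctan (((t - u) ^ 2 - w ^ 2) / (2 * w * (t - u) + 1)) := by
  have hS : 0 < (quadrantToHalfPlane u w t).re := quadrantToHalfPlane_re_pos (by simp [ht, hw])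
  have hS1 : 0 < (quadrantToHalfPlane u w t + 1).re := by rw [add_re, one_re]; linarith
  rw [quadrantInv, one_sub_cayley hS, ← ofReal_ofNat, arg_ofReal_div_of_re_pos two_pos hS1,
    arg_eq_arctan_of_re_pos hS1, ← Real.arctan_neg, add_re, add_im, quadrantToHalfPlane_re,
    quadrantToHalfPlane_im]
  simp only [ofReal_re, ofReal_im, one_re, one_im]
  congr 1
  ring

end Quadrant

theorem tendsto_sq_sub_sq_div_atTop {w : ℝ} (hw : 0 ≤ w) :
    Tendsto (fun a : ℝ ↦ (a ^ 2 - w ^ 2) / (2 * w * a + 1)) atTop atTop := by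
  have hlower : Tendsto (fun a : ℝ ↦ (a - w) / (2 * w + 1)) atTop atTop :=
    (tendsto_atTop_add_const_right atTop (-w) tendsto_id).atTop_div_const (by linarith)
  refine tendsto_atTop_mono' atTop ?_ hlower
  filter_upwards [eventually_ge_atTop (w + 1)] with a ha
  rw [div_le_div_iff₀ (by linarith) (by nlinarith)]
  nlinarith [mul_nonneg hw hw]

theorem quadrantMap_slope_general (u w : ℝ) (hw : 0 < w) (finv : ℂ → ℂ)
    (hleft : ∀ z ∈ unitDisc, finv (quadrantMap u w z) = z) :
    Tendsto (fun t : ℝ => Complex.arg (1 - finv (t : ℂ))) atTop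
      (nhds (π / 2)) := by
  have hfinv : ∀ t : ℝ, u < t → finv t = quadrantInv u w t := fun t ht ↦ by
    have hζ : u < (t : ℂ).re ∧ -w < (t : ℂ).im := by simp [ht, hw]
    simpa [quadrantMap_quadrantInv hζ] using hleft _ (quadrantInv_mem_unitDisc hζ)
  have hlim := (tendsto_arctan_atTop.mono_right nhdsWithin_le_nhds).comp
    ((tendsto_sq_sub_sq_div_atTop hw.le).comp (tendsto_atTop_add_const_right atTop (-u) tendsto_id))
  refine hlim.congr' ?_
  filter_upwards [eventually_gt_atTop u] with t ht
  simp only [Function.comp_apply, id, ← sub_eq_add_neg]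
  rw [hfinv t ht, arg_one_sub_quadrantInv_ofReal hw ht]

/-- For the conformal map `f` of the disc onto the quadrant `{Re z > u, Im z > -w}` given by
`f(z) = ((1+i)/√2) √((1+z)/(1-z)) + u - i w`, one has `Arg(1 - f⁻¹(t)) → π/2` as the real
parameter `t → +∞`. -/
theorem quadrantMap_slope (u w : ℝ) (hw : 0 < w) (finv : ℂ → ℂ)
    (hbij : Set.BijOn (quadrantMap u w) unitDisc {z : ℂ | u < z.re ∧ -w < z.im})
    (hleft : ∀ z ∈ unitDisc, finv (quadrantMap u w z) = z)
    (hright : ∀ ζ ∈ {z : ℂ | u < z.re ∧ -w < z.im}, quadrantMap u w (finv ζ) = ζ) :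
    Tendsto (fun t : ℝ => Complex.arg (1 - finv (t : ℂ))) atTop
      (nhds (π / 2)) :=
  quadrantMap_slope_general u w hw finv hleft
end

section
/- Let r > 0 and let Φ be holomorphic and injective on the open set 𝔻 ∪ B(1,r), where B(1,r) is the open disc of radius r centered at 1. Suppose Φ(𝔻) ⊆ 𝔻 and Φ(1) = 1. Then Φ′(1) is a strictly positive real number, and (1 − Φ(z))/(1 − z) → Φ′(1) as z → 1 with z ∈ 𝔻 (the unrestricted limit in 𝔻). -/
open Complex Filter Real Set

/-!
Since `Φ` maps `𝔻` into `𝔻` and fixes the boundary point `1`, the function `‖Φ‖²` restricted to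
`𝔻` is maximal at `1`. Fermat's rule along every direction `v` pointing into `𝔻` (`re v < 0`)
gives `re (v Φ'(1)) ≤ 0`, which puts `Φ'(1)` on the closed positive real axis. Injectivity near `1`
excludes `Φ'(1) = 0`: otherwise `Φ - 1` would locally be the `n`-th power, `n ≥ 2`, of a local
coordinate, hence at least two-to-one. The limit is the derivative itself, because `1 ∉ 𝔻`.
-/

open Metric Topology

lemma exists_ne_pow_eq_pow_of_mem_nhds_zero {n : ℕ} (hn : 2 ≤ n) {U : Set ℂ} (hU : U ∈ 𝓝 0) :
    ∃ w₁ ∈ U, ∃ w₂ ∈ U, w₁ ≠ w₂ ∧ w₁ ^ n = w₂ ^ n := by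
  obtain ⟨ζ, hζ⟩ : ∃ ζ : ℂ, IsPrimitiveRoot ζ n := ⟨_, isPrimitiveRoot_exp n (by omega)⟩
  have hrot : Tendsto (ζ * ·) (𝓝[≠] 0) (𝓝 0) := by
    simpa using ((continuous_const_mul ζ).tendsto 0).mono_left nhdsWithin_le_nhds
  have hU' : ∀ᶠ w in 𝓝[≠] (0 : ℂ), w ∈ U := nhdsWithin_le_nhds hU
  obtain ⟨w, hwU, hζwU, hw0⟩ := (hU'.and ((hrot.eventually_mem hU).and self_mem_nhdsWithin)).exists
  refine ⟨w, hwU, ζ * w, hζwU, fun h ↦ hζ.ne_one (by omega) ?_, by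
    rw [mul_pow, hζ.pow_eq_one, one_mul]⟩
  exact (mul_left_eq_self₀.mp h.symm).resolve_right hw0

lemma AnalyticAt.exists_analyticAt_pow_eq {g : ℂ → ℂ} {z₀ : ℂ} (hg : AnalyticAt ℂ g z₀)
    (hg0 : g z₀ ≠ 0) {n : ℕ} (hn : n ≠ 0) :
    ∃ σ : ℂ → ℂ, AnalyticAt ℂ σ z₀ ∧ σ z₀ ≠ 0 ∧ ∀ z, σ z ^ n = g z := by
  obtain ⟨c, hc⟩ := IsAlgClosed.exists_pow_nat_eq (g z₀) (Nat.pos_of_ne_zero hn)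
  -- dividing by `g z₀` keeps the base of the power near `1`, inside the slit plane
  refine ⟨fun z ↦ c * (g z / g z₀) ^ (n⁻¹ : ℂ), ?_, ?_, fun z ↦ ?_⟩
  · exact analyticAt_const.mul ((hg.div_const).cpow analyticAt_const (by simp [hg0]))
  · simpa [hg0] using fun h : c = 0 ↦ hg0 (by rw [← hc, h, zero_pow hn])
  · rw [mul_pow, cpow_nat_inv_pow _ hn, hc, mul_div_cancel₀ _ hg0]

lemma AnalyticAt.exists_eventuallyEq_pow_of_analyticOrderAt_eq {F : ℂ → ℂ} {z₀ : ℂ} {n : ℕ}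
    (hF : AnalyticAt ℂ F z₀) (hn : n ≠ 0) (hord : analyticOrderAt F z₀ = n) :
    ∃ h : ℂ → ℂ, ∃ c ≠ 0, HasStrictDerivAt h c z₀ ∧ h z₀ = 0 ∧
      F =ᶠ[𝓝 z₀] fun z ↦ h z ^ n := by
  obtain ⟨g, hg, hg0, hFg⟩ := hF.analyticOrderAt_eq_natCast.mp hord
  obtain ⟨σ, hσ, hσ0, hσg⟩ := hg.exists_analyticAt_pow_eq hg0 hn
  refine ⟨fun z ↦ (z - z₀) * σ z, σ z₀, hσ0, ?_, by simp, ?_⟩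
  · simpa using HasStrictDerivAt.fun_mul ((hasStrictDerivAt_id z₀).sub_const z₀) hσ.hasStrictDerivAt
  · filter_upwards [hFg] with z hz
    rw [hz, mul_pow, hσg, smul_eq_mul]

lemma not_injOn_of_eventuallyEq_pow {F h : ℂ → ℂ} {z₀ c : ℂ} {n : ℕ} (hn : 2 ≤ n)
    (hh : HasStrictDerivAt h c z₀) (hc : c ≠ 0) (hh0 : h z₀ = 0)
    (hF : F =ᶠ[𝓝 z₀] fun z ↦ h z ^ n) {s : Set ℂ} (hs : s ∈ 𝓝 z₀) : ¬ InjOn F s := by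
  intro hinj
  have hmap : map h (𝓝 z₀) = 𝓝 0 := hh0 ▸ hh.map_nhds_eq hc
  have ht : {z | z ∈ s ∧ F z = h z ^ n} ∈ 𝓝 z₀ := inter_mem hs hF
  obtain ⟨_, ⟨z₁, ⟨hz₁s, hF₁⟩, rfl⟩, _, ⟨z₂, ⟨hz₂s, hF₂⟩, rfl⟩, hne, hpow⟩ :=
    exists_ne_pow_eq_pow_of_mem_nhds_zero hn (hmap ▸ image_mem_map ht)
  exact hne (congrArg h (hinj hz₁s hz₂s (by rw [hF₁, hF₂, hpow])))

lemma AnalyticAt.deriv_ne_zero_of_injOn {f : ℂ → ℂ} {z₀ : ℂ} {s : Set ℂ}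
    (hf : AnalyticAt ℂ f z₀) (hs : s ∈ 𝓝 z₀) (hinj : InjOn f s) : deriv f z₀ ≠ 0 := by
  intro hderiv
  have hF : AnalyticAt ℂ (f · - f z₀) z₀ := hf.sub analyticAt_const
  have hFinj : InjOn (f · - f z₀) s := fun a ha b hb hab ↦ hinj ha hb (sub_left_inj.mp hab)
  have hord_ne_top : analyticOrderAt (f · - f z₀) z₀ ≠ ⊤ := by
    intro htop
    have hconst : ∀ᶠ z in 𝓝[≠] z₀, z = z₀ := by
      refine eventually_nhdsWithin_of_eventually_nhds ?_
      filter_upwards [analyticOrderAt_eq_top.mp htop, hs] with z hz hzs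
      exact hFinj hzs (mem_of_mem_nhds hs) (by simpa using hz)
    obtain ⟨z, hz, hne⟩ := (hconst.and self_mem_nhdsWithin).exists
    exact hne hz
  have hord_two : 2 ≤ analyticOrderAt (f · - f z₀) z₀ := by
    rw [← hf.analyticOrderAt_deriv_add_one]
    have : 1 ≤ analyticOrderAt (deriv f) z₀ :=
      Order.one_le_iff_ne_zero.mpr (analyticOrderAt_ne_zero.mpr ⟨hf.deriv, hderiv⟩)
    calc (2 : ℕ∞) = 1 + 1 := one_add_one_eq_two.symm
      _ ≤ _ := by gcongr
  obtain ⟨n, hn⟩ := ENat.ne_top_iff_exists.mp hord_ne_top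
  rw [← hn, Nat.ofNat_le_cast] at hord_two
  obtain ⟨h, c, hc, hh, hh0, hFh⟩ :=
    hF.exists_eventuallyEq_pow_of_analyticOrderAt_eq (by omega) hn.symm
  exact not_injOn_of_eventuallyEq_pow hord_two hh hc hh0 hFh hs hFinj

lemma mem_posTangentConeAt_ball_of_inner_neg {E : Type*} [NormedAddCommGroup E]
    [InnerProductSpace ℝ E] {x v : E} (hv : inner ℝ x v < 0) :
    v ∈ posTangentConeAt (ball 0 ‖x‖) x := by
  have hv0 : 0 < ‖v‖ ^ 2 := by
    have : v ≠ 0 := by rintro rfl; simp at hv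
    positivity
  refine mem_posTangentConeAt_of_frequently_mem (Eventually.frequently ?_)
  filter_upwards [Ioo_mem_nhdsGT (div_pos (neg_pos.mpr hv) hv0)] with t ⟨ht0, ht⟩
  have hsq : ‖x + t • v‖ ^ 2 < ‖x‖ ^ 2 := by
    rw [norm_add_sq_real, inner_smul_right, norm_smul, mul_pow, Real.norm_eq_abs, sq_abs]
    rw [lt_div_iff₀ hv0] at ht
    nlinarith
  simpa using lt_of_pow_lt_pow_left₀ 2 (norm_nonneg x) hsq

lemma IsLocalMaxOn.inner_hasFDerivAt_nonpos {E F : Type*} [NormedAddCommGroup E]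
    [NormedSpace ℝ E] [NormedAddCommGroup F] [InnerProductSpace ℝ F] {f : E → F}
    {f' : E →L[ℝ] F} {s : Set E} {a y : E} (hmax : IsLocalMaxOn (‖f ·‖) s a)
    (hf : HasFDerivAt f f' a) (hy : y ∈ posTangentConeAt s a) : inner ℝ (f a) (f' y) ≤ 0 := by
  have hmax_sq : IsLocalMaxOn (‖f ·‖ ^ 2) s a :=
    hmax.mono fun x hx ↦ pow_le_pow_left₀ (norm_nonneg _) hx 2
  have : 2 * inner ℝ (f a) (f' y) ≤ 0 := by
    simpa using hmax_sq.hasFDerivWithinAt_nonpos hf.norm_sq.hasFDerivWithinAt hy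
  linarith

lemma re_mul_nonpos_of_hasDerivAt_of_mapsTo_unitDisc {Φ : ℂ → ℂ} {d v : ℂ}
    (hΦ : HasDerivAt Φ d 1) (hmaps : MapsTo Φ unitDisc unitDisc) (hfix : Φ 1 = 1)
    (hv : v.re < 0) : (v * d).re ≤ 0 := by
  have hmax : IsLocalMaxOn (‖Φ ·‖) unitDisc 1 :=
    IsMaxOn.localize fun z hz ↦ by simpa [hfix] using (hmaps hz).out.le
  have hdisc : unitDisc = ball 0 ‖(1 : ℂ)‖ := by ext; simp [unitDisc]
  have hcone : v ∈ posTangentConeAt unitDisc 1 :=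
    hdisc ▸ mem_posTangentConeAt_ball_of_inner_neg (by simpa using hv)
  simpa [hfix] using hmax.inner_hasFDerivAt_nonpos (hΦ.hasFDerivAt.restrictScalars ℝ) hcone

lemma exists_pos_eq_ofReal_of_re_mul_nonpos {d : ℂ} (hd : d ≠ 0)
    (h : ∀ v : ℂ, v.re < 0 → (v * d).re ≤ 0) : ∃ c : ℝ, 0 < c ∧ d = c := by
  have hre : 0 ≤ d.re := by simpa using h (-1) (by simp)
  have him : d.im = 0 := by
    by_contra him
    have hv : ((⟨-1, -(d.re + 1) / d.im⟩ : ℂ) * d).re = 1 := by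
      rw [mul_re]
      field_simp
      ring
    linarith [h ⟨-1, -(d.re + 1) / d.im⟩ (by norm_num)]
  exact ⟨d.re, hre.lt_of_ne fun h0 ↦ hd (Complex.ext h0.symm him), Complex.ext rfl (by simp [him])⟩

/-- If `Φ` is holomorphic and injective on `𝔻 ∪ B(1,r)`, maps `𝔻` into `𝔻`, and fixes `1`,
then `Φ'(1)` is a strictly positive real number and `(1 - Φ(z))/(1 - z) → Φ'(1)` as
`z → 1` unrestrictedly inside `𝔻`. -/
theorem boundary_derivative_positive (r : ℝ) (hr : 0 < r) (Φ : ℂ → ℂ)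
    (hdiff : DifferentiableOn ℂ Φ (unitDisc ∪ Metric.ball (1 : ℂ) r))
    (hinj : Set.InjOn Φ (unitDisc ∪ Metric.ball (1 : ℂ) r))
    (hmaps : Set.MapsTo Φ unitDisc unitDisc)
    (hfix : Φ 1 = 1) :
    ∃ c : ℝ, 0 < c ∧ deriv Φ 1 = (c : ℂ) ∧
      Tendsto (fun z : ℂ => (1 - Φ z) / (1 - z)) (nhdsWithin 1 unitDisc)
        (nhds ((c : ℝ) : ℂ)) := by
  have hU : unitDisc ∪ ball 1 r ∈ 𝓝 (1 : ℂ) :=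
    mem_of_superset (ball_mem_nhds 1 hr) subset_union_right
  have hΦ : AnalyticAt ℂ Φ 1 := hdiff.analyticAt hU
  have hderiv : HasDerivAt Φ (deriv Φ 1) 1 := hΦ.differentiableAt.hasDerivAt
  obtain ⟨c, hc, hdc⟩ := exists_pos_eq_ofReal_of_re_mul_nonpos (hΦ.deriv_ne_zero_of_injOn hU hinj)
    fun v hv ↦ re_mul_nonpos_of_hasDerivAt_of_mapsTo_unitDisc hderiv hmaps hfix hv
  have hslope : (fun z ↦ (1 - Φ z) / (1 - z)) = slope Φ 1 :=
    funext fun z ↦ by rw [slope_comm, slope_def_field, hfix]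
  have hdisc : unitDisc ⊆ {1}ᶜ := by rintro z hz rfl; simp [unitDisc] at hz
  refine ⟨c, hc, hdc, ?_⟩
  rw [hslope, ← hdc]
  exact (hasDerivAt_iff_tendsto_slope.mp hderiv).mono_left (nhdsWithin_mono _ hdisc)
end
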